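/- Any measure M on objects (ρ,H) that is additive and monotone under marginal-catalytic free transitions satisfies super-additivity of the induced function on states: the swap channel between the system (ρ₁₂, H₁+H₂) and a catalyst prepared in (ρ₁⊗ρ₂, H₁+H₂) is Gibbs-preserving, realizes the transition (ρ₁₂, H₁+H₂) → (ρ₁⊗ρ₂, H₁+H₂) with the catalyst's marginals unchanged, and hence M(ρ₁₂, H₁+H₂) ≥ M(ρ₁⊗ρ₂, H₁+H₂). -/

import Mathlib

open Matrix
open scoped Kronecker ComplexOrder

noncomputable section

/-- Matrix logarithm via spectral decomposition (0 for non-Hermitian input). -/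
def mlog {d : Type*} [Fintype d] [DecidableEq d] (A : Matrix d d ℂ) : Matrix d d ℂ :=
  if h : A.IsHermitian then
    (h.eigenvectorUnitary : Matrix d d ℂ) *
      Matrix.diagonal (fun i => (Real.log (h.eigenvalues i) : ℂ)) *
      (star (h.eigenvectorUnitary : Matrix d d ℂ))
  else 0

/-- Quantum relative entropy S(ρ‖σ) = Tr(ρ log ρ − ρ log σ). -/
def relEnt {d : Type*} [Fintype d] [DecidableEq d] (ρ σ : Matrix d d ℂ) : ℝ :=
  (Matrix.trace (ρ * mlog ρ - ρ * mlog σ)).re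

/-- Von Neumann entropy S(ρ) = −Tr(ρ log ρ). -/
def vnEnt {d : Type*} [Fintype d] [DecidableEq d] (ρ : Matrix d d ℂ) : ℝ :=
  -(Matrix.trace (ρ * mlog ρ)).re

/-- ρ is a density operator. -/
def IsDensity {d : Type*} [Fintype d] (ρ : Matrix d d ℂ) : Prop :=
  ρ.PosSemidef ∧ ρ.trace = 1

/-- Full-rank density operator. -/
def IsFaithfulState {d : Type*} [Fintype d] (σ : Matrix d d ℂ) : Prop :=
  σ.PosDef ∧ σ.trace = 1

/-- Apply a linear map blockwise (i.e. (id_k ⊗ T)). -/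
def blockApply {d e : Type*} [Fintype d] [DecidableEq d] [Fintype e] [DecidableEq e]
    (T : Matrix d d ℂ →ₗ[ℂ] Matrix e e ℂ) {k : Type*}
    (M : Matrix (k × d) (k × d) ℂ) : Matrix (k × e) (k × e) ℂ :=
  Matrix.of fun p q => T (Matrix.of fun i j => M (p.1, i) (q.1, j)) p.2 q.2

/-- Quantum channel: trace preserving and completely positive. -/
def IsQChannel {d e : Type*} [Fintype d] [DecidableEq d] [Fintype e] [DecidableEq e]
    (T : Matrix d d ℂ →ₗ[ℂ] Matrix e e ℂ) : Prop :=
  (∀ M : Matrix d d ℂ, (T M).trace = M.trace) ∧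
  (∀ (k : Type) [Fintype k] [DecidableEq k] (M : Matrix (k × d) (k × d) ℂ),
      M.PosSemidef → (blockApply T M).PosSemidef)

/-- Gibbs state ω_{β,H} = e^{−βH}/Tr e^{−βH}. -/
def gibbs {d : Type*} [Fintype d] [DecidableEq d] (β : ℝ) (H : Matrix d d ℂ) :
    Matrix d d ℂ :=
  (Matrix.trace (NormedSpace.exp ((-β : ℂ) • H)))⁻¹ • NormedSpace.exp ((-β : ℂ) • H)

/-- Non-equilibrium free energy difference ΔF_β(ρ,H) = (1/β) S(ρ‖ω_{β,H}). -/
def dF {d : Type*} [Fintype d] [DecidableEq d] (β : ℝ) (ρ H : Matrix d d ℂ) : ℝ :=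
  (1 / β) * relEnt ρ (gibbs β H)

/-- Partial trace over the second factor. -/
def ptraceRight {d₁ d₂ : Type*} [Fintype d₂]
    (M : Matrix (d₁ × d₂) (d₁ × d₂) ℂ) : Matrix d₁ d₁ ℂ :=
  Matrix.of fun i j => ∑ k, M (i, k) (j, k)

/-- Partial trace over the first factor. -/
def ptraceLeft {d₁ d₂ : Type*} [Fintype d₁]
    (M : Matrix (d₁ × d₂) (d₁ × d₂) ℂ) : Matrix d₂ d₂ ℂ :=
  Matrix.of fun i j => ∑ k, M (k, i) (k, j)

/-- n-fold tensor power of a matrix. -/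
def tpow {d : Type*} [Fintype d] (ρ : Matrix d d ℂ) (n : ℕ) :
    Matrix (Fin n → d) (Fin n → d) ℂ :=
  Matrix.of fun a b => ∏ i, ρ (a i) (b i)

/-- Tensor product of a finite family of matrices. -/
def tprodFam {k : ℕ} {c : Type*} [Fintype c] (γ : Fin k → Matrix c c ℂ) :
    Matrix (Fin k → c) (Fin k → c) ℂ :=
  Matrix.of fun a b => ∏ i, γ i (a i) (b i)

/-- Single-site marginal at site i of a state on an n-fold tensor product. -/
def marginal {d : Type*} [Fintype d] [DecidableEq d] {n : ℕ}
    (M : Matrix (Fin n → d) (Fin n → d) ℂ) (i : Fin n) : Matrix d d ℂ :=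
  Matrix.of fun a b => ∑ g : {j : Fin n // j ≠ i} → d,
    M (fun j => if h : j = i then a else g ⟨j, h⟩)
      (fun j => if h : j = i then b else g ⟨j, h⟩)

/-- Trace norm of a matrix: sum of singular values. -/
def traceNorm {d : Type*} [Fintype d] [DecidableEq d] (A : Matrix d d ℂ) : ℝ :=
  ∑ i, Real.sqrt ((Matrix.posSemidef_conjTranspose_mul_self A).1.eigenvalues i)

/-! Give the catalyst two sites with Hamiltonians `H₁`, `H₂` and prepare it in `ρ₁ ⊗ ρ₂`, the product
of the marginals of `ρ₁₂`. The Gibbs state of the non-interacting Hamiltonian `H₁ + H₂` factorizes as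
`ω_{β,H₁} ⊗ ω_{β,H₂}`, so system and catalyst share the same Gibbs state and swapping them is a
Gibbs-preserving channel. After the swap the system holds `ρ₁ ⊗ ρ₂` and the catalyst holds `ρ₁₂`,
whose marginals are again `ρ₁` and `ρ₂`; monotonicity gives `M(ρ₁ ⊗ ρ₂) ≤ M(ρ₁₂)`. -/

namespace Matrix

section Exp

variable {m n : Type*} [Fintype m] [DecidableEq m] [Fintype n] [DecidableEq n]

theorem map_exp_of_continuous (f : Matrix m m ℂ →+* Matrix n n ℂ) (hf : Continuous f)
    (A : Matrix m m ℂ) : f (NormedSpace.exp A) = NormedSpace.exp (f A) := by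
  -- any norm inducing the product topology would do; matrices carry no global norm instance
  let _ : NormedRing (Matrix m m ℂ) := Matrix.linftyOpNormedRing
  let _ : NormedAlgebra ℂ (Matrix m m ℂ) := Matrix.linftyOpNormedAlgebra
  let _ : NormedAlgebra ℚ (Matrix m m ℂ) := Matrix.linftyOpNormedAlgebra
  let _ : NormedRing (Matrix n n ℂ) := Matrix.linftyOpNormedRing
  exact NormedSpace.map_exp f hf A

theorem exp_kronecker_one (A : Matrix m m ℂ) :
    NormedSpace.exp (A ⊗ₖ (1 : Matrix n n ℂ)) = NormedSpace.exp A ⊗ₖ (1 : Matrix n n ℂ) := by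
  rw [kronecker_one, kronecker_one]
  exact (map_exp_of_continuous ((blockDiagonalRingHom m n ℂ).comp (Pi.constRingHom n _))
    (continuous_pi fun _ => continuous_id).matrix_blockDiagonal A).symm

theorem exp_one_kronecker (B : Matrix n n ℂ) :
    NormedSpace.exp ((1 : Matrix m m ℂ) ⊗ₖ B) = (1 : Matrix m m ℂ) ⊗ₖ NormedSpace.exp B := by
  rw [one_kronecker, one_kronecker]
  exact (map_exp_of_continuous ((reindexRingEquiv ℂ (Equiv.prodComm n m)).toRingHom.comp
      ((blockDiagonalRingHom n m ℂ).comp (Pi.constRingHom m _)))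
    ((continuous_pi fun _ => continuous_id).matrix_blockDiagonal.matrix_reindex _ _) B).symm

theorem exp_kroneckerSum (A : Matrix m m ℂ) (B : Matrix n n ℂ) :
    NormedSpace.exp (A ⊗ₖ (1 : Matrix n n ℂ) + (1 : Matrix m m ℂ) ⊗ₖ B) =
      NormedSpace.exp A ⊗ₖ NormedSpace.exp B := by
  have hcomm : Commute (A ⊗ₖ (1 : Matrix n n ℂ)) ((1 : Matrix m m ℂ) ⊗ₖ B) := by
    simp only [Commute, SemiconjBy, ← mul_kronecker_mul, mul_one, one_mul]
  rw [exp_add_of_commute _ _ hcomm, exp_kronecker_one, exp_one_kronecker, ← mul_kronecker_mul,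
    mul_one, one_mul]

end Exp

theorem IsHermitian.kronecker {R m n : Type*} [CommMagma R] [StarMul R]
    {A : Matrix m m R} {B : Matrix n n R} (hA : A.IsHermitian) (hB : B.IsHermitian) :
    (A ⊗ₖ B).IsHermitian := by
  rw [IsHermitian, conjTranspose_kronecker, hA.eq, hB.eq]

theorem IsHermitian.kroneckerSum {R m n : Type*} [CommSemiring R] [StarRing R]
    [DecidableEq m] [DecidableEq n] {A : Matrix m m R} {B : Matrix n n R} (hA : A.IsHermitian) (hB : B.IsHermitian) :
    (A ⊗ₖ (1 : Matrix n n R) + (1 : Matrix m m R) ⊗ₖ B).IsHermitian :=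
  (hA.kronecker isHermitian_one).add (isHermitian_one.kronecker hB)

theorem trace_reindex {R m n : Type*} [AddCommMonoid R] [Fintype m] [Fintype n] (e : m ≃ n)
    (A : Matrix m m R) : (reindex e e A).trace = A.trace := by
  simp only [trace, diag, reindex_apply, submatrix_apply]
  exact e.symm.sum_comp fun i => A i i

theorem reindex_prodComm_kronecker {R l m n p : Type*} [CommMagma R]
    (A : Matrix l m R) (B : Matrix n p R) :
    reindex (Equiv.prodComm l n) (Equiv.prodComm m p) (A ⊗ₖ B) = B ⊗ₖ A := by
  ext ⟨i, j⟩ ⟨k, l⟩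
  exact mul_comm _ _

end Matrix

open NormedSpace in
theorem gibbs_kroneckerSum {m n : Type*} [Fintype m] [DecidableEq m] [Fintype n] [DecidableEq n]
    (β : ℝ) (H₁ : Matrix m m ℂ) (H₂ : Matrix n n ℂ) :
    gibbs β (H₁ ⊗ₖ (1 : Matrix n n ℂ) + (1 : Matrix m m ℂ) ⊗ₖ H₂) =
      gibbs β H₁ ⊗ₖ gibbs β H₂ := by
  have hexp : exp ((-β : ℂ) • (H₁ ⊗ₖ (1 : Matrix n n ℂ) + (1 : Matrix m m ℂ) ⊗ₖ H₂)) =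
      exp ((-β : ℂ) • H₁) ⊗ₖ exp ((-β : ℂ) • H₂) := by
    rw [smul_add, ← smul_kronecker, ← kronecker_smul, exp_kroneckerSum]
  rw [gibbs, gibbs, gibbs, hexp, trace_kronecker, mul_inv, smul_kronecker, kronecker_smul,
    smul_smul]

theorem isQChannel_reindex {d d' : Type*} [Fintype d] [DecidableEq d] [Fintype d']
    [DecidableEq d'] (e : d ≃ d') : IsQChannel (reindexLinearEquiv ℂ ℂ e e).toLinearMap :=
  ⟨trace_reindex e, fun _ _ _ _ hM => hM.submatrix (Prod.map id e.symm)⟩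

section PartialTrace

variable {d₁ d₂ : Type*} {M : Matrix (d₁ × d₂) (d₁ × d₂) ℂ}

theorem trace_ptraceRight [Fintype d₁] [Fintype d₂] : (ptraceRight M).trace = M.trace := by
  simp only [trace, diag, ptraceRight, of_apply, Fintype.sum_prod_type]

theorem trace_ptraceLeft [Fintype d₁] [Fintype d₂] : (ptraceLeft M).trace = M.trace := by
  simp only [trace, diag, ptraceLeft, of_apply, Fintype.sum_prod_type]
  exact Finset.sum_comm

theorem ptraceRight_eq_sum_submatrix [Fintype d₂] :
    ptraceRight M = ∑ k, M.submatrix (fun i => (i, k)) (fun j => (j, k)) := by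
  ext i j
  simp [ptraceRight, Matrix.sum_apply]

theorem ptraceLeft_eq_sum_submatrix [Fintype d₁] :
    ptraceLeft M = ∑ k, M.submatrix (fun i => (k, i)) (fun j => (k, j)) := by
  ext i j
  simp [ptraceLeft, Matrix.sum_apply]

theorem Matrix.PosSemidef.ptraceRight [Fintype d₁] [Fintype d₂] (hM : M.PosSemidef) :
    (ptraceRight M).PosSemidef := by
  rw [ptraceRight_eq_sum_submatrix]
  exact posSemidef_sum _ fun _ _ => hM.submatrix _

theorem Matrix.PosSemidef.ptraceLeft [Fintype d₁] [Fintype d₂] (hM : M.PosSemidef) :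
    (ptraceLeft M).PosSemidef := by
  rw [ptraceLeft_eq_sum_submatrix]
  exact posSemidef_sum _ fun _ _ => hM.submatrix _

theorem IsDensity.ptraceRight [Fintype d₁] [Fintype d₂] (hM : IsDensity M) :
    IsDensity (ptraceRight M) :=
  ⟨hM.1.ptraceRight, trace_ptraceRight.trans hM.2⟩

theorem IsDensity.ptraceLeft [Fintype d₁] [Fintype d₂] (hM : IsDensity M) :
    IsDensity (ptraceLeft M) :=
  ⟨hM.1.ptraceLeft, trace_ptraceLeft.trans hM.2⟩

end PartialTrace

theorem marginal_catalytic_implies_superadditive_general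
    (β : ℝ)
    (M : ∀ (d : Type) [Fintype d] [DecidableEq d], Matrix d d ℂ → Matrix d d ℂ → ℝ)
    (hmono : ∀ (dS dS' c₁ c₂ : Type) [Fintype dS] [DecidableEq dS]
        [Fintype dS'] [DecidableEq dS'] [Fintype c₁] [DecidableEq c₁]
        [Fintype c₂] [DecidableEq c₂]
        (G : Matrix (dS × (c₁ × c₂)) (dS × (c₁ × c₂)) ℂ →ₗ[ℂ]
             Matrix (dS' × (c₁ × c₂)) (dS' × (c₁ × c₂)) ℂ),
        IsQChannel G →
        ∀ (H : Matrix dS dS ℂ) (K : Matrix dS' dS' ℂ)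
          (R₁ : Matrix c₁ c₁ ℂ) (R₂ : Matrix c₂ c₂ ℂ),
        H.IsHermitian → K.IsHermitian → R₁.IsHermitian → R₂.IsHermitian →
        G (gibbs β H ⊗ₖ (gibbs β R₁ ⊗ₖ gibbs β R₂)) =
          gibbs β K ⊗ₖ (gibbs β R₁ ⊗ₖ gibbs β R₂) →
        ∀ (ρ : Matrix dS dS ℂ) (σ : Matrix dS' dS' ℂ)
          (γ₁ : Matrix c₁ c₁ ℂ) (γ₂ : Matrix c₂ c₂ ℂ)
          (γt : Matrix (c₁ × c₂) (c₁ × c₂) ℂ),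
        IsDensity ρ → IsDensity γ₁ → IsDensity γ₂ →
        G (ρ ⊗ₖ (γ₁ ⊗ₖ γ₂)) = σ ⊗ₖ γt →
        ptraceRight γt = γ₁ → ptraceLeft γt = γ₂ →
        M dS' σ K ≤ M dS ρ H)
    (d₁ d₂ : Type) [Fintype d₁] [DecidableEq d₁] [Fintype d₂] [DecidableEq d₂]
    (ρ₁₂ : Matrix (d₁ × d₂) (d₁ × d₂) ℂ) (hρ₁₂ : IsDensity ρ₁₂)
    (H₁ : Matrix d₁ d₁ ℂ) (H₂ : Matrix d₂ d₂ ℂ)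
    (hH₁ : H₁.IsHermitian) (hH₂ : H₂.IsHermitian) :
    M (d₁ × d₂) (ptraceRight ρ₁₂ ⊗ₖ ptraceLeft ρ₁₂)
        (H₁ ⊗ₖ (1 : Matrix d₂ d₂ ℂ) + (1 : Matrix d₁ d₁ ℂ) ⊗ₖ H₂) ≤
      M (d₁ × d₂) ρ₁₂
        (H₁ ⊗ₖ (1 : Matrix d₂ d₂ ℂ) + (1 : Matrix d₁ d₁ ℂ) ⊗ₖ H₂) := by
  have hH := hH₁.kroneckerSum hH₂
  refine hmono _ _ d₁ d₂ _ (isQChannel_reindex (Equiv.prodComm _ _)) _ _ H₁ H₂ hH hH hH₁ hH₂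
    ?_ ρ₁₂ _ _ _ ρ₁₂ hρ₁₂ hρ₁₂.ptraceRight hρ₁₂.ptraceLeft
    (reindex_prodComm_kronecker _ _) rfl rfl
  rw [gibbs_kroneckerSum]
  exact reindex_prodComm_kronecker _ _

theorem marginal_catalytic_implies_superadditive
    (β : ℝ) (hβ : 0 < β)
    (M : ∀ (d : Type) [Fintype d] [DecidableEq d], Matrix d d ℂ → Matrix d d ℂ → ℝ)
    (hadd : ∀ (d₁ d₂ : Type) [Fintype d₁] [DecidableEq d₁] [Fintype d₂] [DecidableEq d₂]
        (ρ₁ H₁ : Matrix d₁ d₁ ℂ) (ρ₂ H₂ : Matrix d₂ d₂ ℂ),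
        M (d₁ × d₂) (ρ₁ ⊗ₖ ρ₂) (H₁ ⊗ₖ (1 : Matrix d₂ d₂ ℂ) + (1 : Matrix d₁ d₁ ℂ) ⊗ₖ H₂) =
          M d₁ ρ₁ H₁ + M d₂ ρ₂ H₂)
    (hmono : ∀ (dS dS' c₁ c₂ : Type) [Fintype dS] [DecidableEq dS]
        [Fintype dS'] [DecidableEq dS'] [Fintype c₁] [DecidableEq c₁]
        [Fintype c₂] [DecidableEq c₂]
        (G : Matrix (dS × (c₁ × c₂)) (dS × (c₁ × c₂)) ℂ →ₗ[ℂ]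
             Matrix (dS' × (c₁ × c₂)) (dS' × (c₁ × c₂)) ℂ),
        IsQChannel G →
        ∀ (H : Matrix dS dS ℂ) (K : Matrix dS' dS' ℂ)
          (R₁ : Matrix c₁ c₁ ℂ) (R₂ : Matrix c₂ c₂ ℂ),
        H.IsHermitian → K.IsHermitian → R₁.IsHermitian → R₂.IsHermitian →
        G (gibbs β H ⊗ₖ (gibbs β R₁ ⊗ₖ gibbs β R₂)) =
          gibbs β K ⊗ₖ (gibbs β R₁ ⊗ₖ gibbs β R₂) →
        ∀ (ρ : Matrix dS dS ℂ) (σ : Matrix dS' dS' ℂ)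
          (γ₁ : Matrix c₁ c₁ ℂ) (γ₂ : Matrix c₂ c₂ ℂ)
          (γt : Matrix (c₁ × c₂) (c₁ × c₂) ℂ),
        IsDensity ρ → IsDensity γ₁ → IsDensity γ₂ →
        G (ρ ⊗ₖ (γ₁ ⊗ₖ γ₂)) = σ ⊗ₖ γt →
        ptraceRight γt = γ₁ → ptraceLeft γt = γ₂ →
        M dS' σ K ≤ M dS ρ H)
    (d₁ d₂ : Type) [Fintype d₁] [DecidableEq d₁] [Fintype d₂] [DecidableEq d₂]
    (ρ₁₂ : Matrix (d₁ × d₂) (d₁ × d₂) ℂ) (hρ₁₂ : IsDensity ρ₁₂)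
    (H₁ : Matrix d₁ d₁ ℂ) (H₂ : Matrix d₂ d₂ ℂ)
    (hH₁ : H₁.IsHermitian) (hH₂ : H₂.IsHermitian) :
    M (d₁ × d₂) (ptraceRight ρ₁₂ ⊗ₖ ptraceLeft ρ₁₂)
        (H₁ ⊗ₖ (1 : Matrix d₂ d₂ ℂ) + (1 : Matrix d₁ d₁ ℂ) ⊗ₖ H₂) ≤
      M (d₁ × d₂) ρ₁₂
        (H₁ ⊗ₖ (1 : Matrix d₂ d₂ ℂ) + (1 : Matrix d₁ d₁ ℂ) ⊗ₖ H₂) :=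
  marginal_catalytic_implies_superadditive_general β M hmono d₁ d₂ ρ₁₂ hρ₁₂ H₁ H₂ hH₁ hH₂

end
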